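/- Let M be a K_par(G)-module. There is a K-linear bijection between the space Der_par(G,M) of partial derivations δ : K_par(G) → M and the space D(G,M) of maps d : G → M satisfying e_g·d(gh) = [g]·d(h) + e_{gh}·d(g), given by d(g) = δ([g]) and inversely δ(e[g]) = e·d(g). -/

import Mathlib

/-- A concrete model of Exel's inverse monoid `S(G)`: pairs `(E, g)` where `E` is a
finite subset of `G` containing `1` and `g`, with product `(E,g)(F,h) = (E ∪ gF, gh)`. -/
@[ext]
structure ExelS (G : Type*) [Group G] [DecidableEq G] where
  carrier : Finset G
  elt : G
  one_mem : (1 : G) ∈ carrier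
  elt_mem : elt ∈ carrier

namespace ExelS

variable {G : Type*} [Group G] [DecidableEq G]

instance : Mul (ExelS G) :=
  ⟨fun s t =>
    ⟨s.carrier ∪ t.carrier.image (s.elt * ·), s.elt * t.elt,
      Finset.mem_union_left _ s.one_mem,
      Finset.mem_union_right _ (Finset.mem_image_of_mem _ t.elt_mem)⟩⟩

instance : One (ExelS G) :=
  ⟨⟨{1}, 1, Finset.mem_singleton_self 1, Finset.mem_singleton_self 1⟩⟩

/-- The inverse in the inverse monoid `S(G)`. -/
instance : Inv (ExelS G) :=
  ⟨fun s =>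
    ⟨s.carrier.image (s.elt⁻¹ * ·), s.elt⁻¹,
      Finset.mem_image.2 ⟨s.elt, s.elt_mem, by simp⟩,
      Finset.mem_image.2 ⟨1, s.one_mem, by simp⟩⟩⟩

@[simp] lemma mul_carrier (s t : ExelS G) :
    (s * t).carrier = s.carrier ∪ t.carrier.image (s.elt * ·) := rfl

@[simp] lemma mul_elt (s t : ExelS G) : (s * t).elt = s.elt * t.elt := rfl

@[simp] lemma one_carrier : (1 : ExelS G).carrier = {1} := rfl

@[simp] lemma one_elt : (1 : ExelS G).elt = 1 := rfl

@[simp] lemma inv_carrier (s : ExelS G) :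
    s⁻¹.carrier = s.carrier.image (s.elt⁻¹ * ·) := rfl

@[simp] lemma inv_elt (s : ExelS G) : s⁻¹.elt = s.elt⁻¹ := rfl

instance : Monoid (ExelS G) where
  mul_assoc a b c := by
    ext x
    · simp only [mul_carrier, Finset.image_union, Finset.image_image, Finset.union_assoc,
        Finset.mem_union, Finset.mem_image, Function.comp]
      constructor <;> rintro (h | h | ⟨y, hy, rfl⟩) <;> simp_all [mul_assoc]
    · simp [mul_assoc]
  one_mul s := by
    ext x
    · simp only [mul_carrier, one_carrier, one_elt, one_mul, Finset.image_id']
      constructor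
      · intro h
        rcases Finset.mem_union.1 h with h | h
        · exact (Finset.mem_singleton.1 h) ▸ s.one_mem
        · exact h
      · exact fun h => Finset.mem_union_right _ h
    · simp
  mul_one s := by
    ext x
    · simp only [mul_carrier, one_carrier, Finset.image_singleton, mul_one]
      constructor
      · intro h
        rcases Finset.mem_union.1 h with h | h
        · exact h
        · exact (Finset.mem_singleton.1 h) ▸ s.elt_mem
      · exact fun h => Finset.mem_union_left _ h
    · simp

/-- The canonical generators `[g]` of Exel's monoid. -/
def br (g : G) : ExelS G := ⟨{1, g}, g, by simp, by simp⟩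

/-- The idempotents `e_g = [g][g⁻¹]`. -/
def eIdem (g : G) : ExelS G := br g * (br g⁻¹ : ExelS G)

end ExelS

noncomputable section

open ExelS MonoidAlgebra

variable {G : Type*} [Group G] [DecidableEq G] {K : Type*} [CommRing K]
  {M : Type*} [AddCommGroup M] [Module (MonoidAlgebra K (ExelS G)) M]
  [Module K M] [IsScalarTower K (MonoidAlgebra K (ExelS G)) M]
  [SMulCommClass K (MonoidAlgebra K (ExelS G)) M]

variable (K G M) in
/-- The `K`-space of partial derivations `K_par(G) → M`. -/
def DerPar : Submodule K (MonoidAlgebra K (ExelS G) →ₗ[K] M) where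
  carrier := {δ | ∀ s t : ExelS G,
    δ (of K (ExelS G) s * of K (ExelS G) t) =
      of K (ExelS G) s • δ (of K (ExelS G) t) +
        of K (ExelS G) ((s * t) * (s * t)⁻¹) • δ (of K (ExelS G) s)}
  add_mem' := by
    intro δ₁ δ₂ h1 h2 s t
    simp only [LinearMap.add_apply, h1 s t, h2 s t, smul_add]
    abel
  zero_mem' := by intro s t; simp
  smul_mem' := by
    intro k δ h s t
    simp only [LinearMap.smul_apply, h s t, smul_add, smul_comm k]

variable (K G M) in
/-- The `K`-space `D(G, M)` of maps `d : G → M` with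
`e_g·d(gh) = [g]·d(h) + e_{gh}·d(g)`. -/
def DPar : Submodule K (G → M) where
  carrier := {d | ∀ g h : G,
    of K (ExelS G) (eIdem g) • d (g * h) =
      of K (ExelS G) (br g) • d h + of K (ExelS G) (eIdem (g * h)) • d g}
  add_mem' := by
    intro d1 d2 h1 h2 g h
    simp only [Pi.add_apply, smul_add, h1 g h, h2 g h]
    abel
  zero_mem' := by intro g h; simp
  smul_mem' := by
    intro k d hd g h
    simp only [Pi.smul_apply, smul_comm _ k]
    rw [hd g h, smul_add]

end

/-!
A partial derivation vanishes on idempotents: the Leibniz rule for `e = e·e` gives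
`δ(e) = 2·e·δ(e)`, and multiplying by `e` forces `e·δ(e) = 0`. Hence `δ(e s) = e·δ(s)`, and
since every `s ∈ S(G)` is `(ss⁻¹)[g]`, `δ` is determined by `d(g) = δ([g])`; the Leibniz rule
applied to `[g][h] = e_g[gh]` is exactly the identity defining `D(G,M)`. Conversely
`δ(s) = ss⁻¹·d(g)` satisfies the Leibniz rule because `(st)(st)⁻¹` absorbs `ss⁻¹`, `e_g` and
`e_{gh}`, reducing it to the defining identity of `d` multiplied by `(st)(st)⁻¹`.
-/

namespace ExelS

variable {G : Type*} [Group G] [DecidableEq G]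

@[simp] lemma br_carrier (g : G) : (br g).carrier = {1, g} := rfl

@[simp] lemma br_elt (g : G) : (br g).elt = g := rfl

def idem (E : Finset G) : ExelS G :=
  ⟨insert 1 E, 1, Finset.mem_insert_self 1 E, Finset.mem_insert_self 1 E⟩

@[simp] lemma idem_carrier (E : Finset G) : (idem E).carrier = insert 1 E := rfl

@[simp] lemma idem_elt (E : Finset G) : (idem E).elt = 1 := rfl

lemma idem_mul_idem (E F : Finset G) : idem E * idem F = idem (E ∪ F) := by
  ext x <;> simp

lemma idem_insert_one (E : Finset G) : idem (insert 1 E) = idem E := by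
  ext x <;> simp

lemma isIdempotentElem_idem (E : Finset G) : IsIdempotentElem (idem E) := by
  rw [IsIdempotentElem, idem_mul_idem, Finset.union_self]

lemma eq_idem_of_isIdempotentElem {e : ExelS G} (he : IsIdempotentElem e) :
    e = idem e.carrier := by
  have helt : e.elt = 1 := mul_eq_left.1 (congrArg elt he)
  ext x <;> simp [helt, e.one_mem]

lemma mul_inv_self (s : ExelS G) : s * s⁻¹ = idem s.carrier := by
  ext x <;> simp
  grind [s.one_mem]

lemma eIdem_eq_idem (g : G) : eIdem g = idem {g} := by
  ext x <;> simp [eIdem]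
  grind

lemma isIdempotentElem_eIdem (g : G) : IsIdempotentElem (eIdem g) := by
  rw [eIdem_eq_idem]
  exact isIdempotentElem_idem {g}

lemma idem_mul_idem_of_subset {E F : Finset G} (h : F ⊆ E) : idem E * idem F = idem E := by
  rw [idem_mul_idem, Finset.union_eq_left.2 h]

lemma idem_mul_eIdem_of_mem {E : Finset G} {g : G} (h : g ∈ E) : idem E * eIdem g = idem E := by
  rw [eIdem_eq_idem, idem_mul_idem_of_subset (Finset.singleton_subset_iff.2 h)]

lemma idem_br_carrier (g : G) : idem (br g).carrier = eIdem g := by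
  rw [br_carrier, idem_insert_one, eIdem_eq_idem]

lemma idem_carrier_mul_br_elt (s : ExelS G) : idem s.carrier * br s.elt = s := by
  ext x <;> simp
  grind [s.one_mem, s.elt_mem]

lemma mul_idem_carrier (s t : ExelS G) : s * idem t.carrier = idem (s * t).carrier * br s.elt := by
  ext x <;> simp
  grind [s.one_mem, s.elt_mem]

lemma br_mul_br (g h : G) : br g * br h = eIdem g * br (g * h) := by
  ext x <;> simp [eIdem]
  grind

lemma idem_br_mul_br_carrier (g h : G) :
    idem (br g * br h).carrier = eIdem (g * h) * eIdem g := by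
  ext x <;> simp [eIdem]
  grind

lemma idem_mul_br_carrier (E : Finset G) (g : G) :
    idem (idem E * br g).carrier = idem E * eIdem g := by
  ext x <;> simp [eIdem]
  grind

lemma br_one : br (1 : G) = 1 := by
  ext x <;> simp

lemma eIdem_one : eIdem (1 : G) = 1 := by
  rw [eIdem, inv_one, br_one, one_mul]

end ExelS

open ExelS MonoidAlgebra

section

variable {G : Type*} [Group G] [DecidableEq G] {K : Type*} [CommRing K]
  {M : Type*} [AddCommGroup M] [Module K[ExelS G] M] [Module K M]

namespace DerPar

variable [SMulCommClass K K[ExelS G] M] {δ : K[ExelS G] →ₗ[K] M}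

lemma map_of_mul (hδ : δ ∈ DerPar G K M) (s t : ExelS G) :
    δ (of K _ (s * t)) =
      of K _ s • δ (of K _ t) + of K _ (idem (s * t).carrier) • δ (of K _ s) := by
  rw [map_mul, hδ s t, mul_inv_self]

lemma map_of_isIdempotentElem (hδ : δ ∈ DerPar G K M) {e : ExelS G}
    (he : IsIdempotentElem e) : δ (of K _ e) = 0 := by
  have hδe : δ (of K _ e) = of K _ e • δ (of K _ e) + of K _ e • δ (of K _ e) := by
    simpa only [he.eq, ← eq_idem_of_isIdempotentElem he] using map_of_mul hδ e e
  have hδe' : of K _ e • δ (of K _ e) = 0 := by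
    have h := congrArg (of K _ e • ·) hδe
    simp only [smul_add, smul_smul, ← map_mul, he.eq] at h
    exact left_eq_add.1 h
  rw [hδe, hδe', add_zero]

lemma map_of_isIdempotentElem_mul (hδ : δ ∈ DerPar G K M) {e : ExelS G}
    (he : IsIdempotentElem e) (s : ExelS G) :
    δ (of K _ (e * s)) = of K _ e • δ (of K _ s) := by
  rw [map_of_mul hδ, map_of_isIdempotentElem hδ he, smul_zero, add_zero]

lemma map_of_eq_idem_smul (hδ : δ ∈ DerPar G K M) (s : ExelS G) :
    δ (of K _ s) = of K _ (idem s.carrier) • δ (of K _ (br s.elt)) := by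
  rw [← map_of_isIdempotentElem_mul hδ (isIdempotentElem_idem _), idem_carrier_mul_br_elt]

lemma eIdem_smul_map_of_br (hδ : δ ∈ DerPar G K M) (g : G) :
    of K _ (eIdem g) • δ (of K _ (br g)) = δ (of K _ (br g)) := by
  rw [← idem_br_carrier]
  exact (map_of_eq_idem_smul hδ (br g)).symm

end DerPar

namespace DPar

variable [IsScalarTower K K[ExelS G] M] {d : G → M}

lemma eIdem_smul_map_one (hd : d ∈ DPar G K M) (g : G) : of K _ (eIdem g) • d 1 = 0 := by
  have h := hd 1 g
  simp only [eIdem_one, br_one, one_mul, map_one, one_smul] at h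
  exact left_eq_add.1 h

lemma map_eq_neg_br_smul_map_inv (hd : d ∈ DPar G K M) (g : G) :
    d g = -(of K _ (br g) • d g⁻¹) := by
  have h := hd g g⁻¹
  rw [mul_inv_cancel, eIdem_one, map_one, one_smul, eIdem_smul_map_one hd] at h
  exact eq_neg_of_add_eq_zero_left ((add_comm _ _).trans h.symm)

lemma eIdem_smul (hd : d ∈ DPar G K M) (g : G) : of K _ (eIdem g) • d g = d g := by
  have hinv : of K _ (br g⁻¹) • d g = -d g⁻¹ := by
    rw [map_eq_neg_br_smul_map_inv hd g⁻¹, inv_inv, neg_neg]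
  calc of K _ (eIdem g) • d g
      = of K _ (br g) • of K _ (br g⁻¹) • d g := by rw [eIdem, map_mul, mul_smul]
    _ = d g := by rw [hinv, smul_neg, ← map_eq_neg_br_smul_map_inv hd g]

end DPar

/-- The paper's `δ(e[g]) = e·d(g)`, read through the normal form `s = idem s.carrier * br s.elt`
and extended linearly. -/
noncomputable def derOfMap (d : G → M) : K[ExelS G] →ₗ[K] M :=
  (MonoidAlgebra.basis (ExelS G) K).constr K fun s => of K _ (idem s.carrier) • d s.elt

lemma derOfMap_of (d : G → M) (s : ExelS G) :
    derOfMap d (of K _ s) = of K _ (idem s.carrier) • d s.elt :=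
  (MonoidAlgebra.basis (ExelS G) K).constr_basis K _ s

variable [IsScalarTower K K[ExelS G] M] [SMulCommClass K K[ExelS G] M]

lemma DerPar.map_of_br_mem_dPar {δ : K[ExelS G] →ₗ[K] M} (hδ : δ ∈ DerPar G K M) :
    (fun g => δ (of K _ (br g))) ∈ DPar G K M := by
  intro g h
  have h1 := DerPar.map_of_mul hδ (br g) (br h)
  rwa [idem_br_mul_br_carrier, map_mul (of K _) (eIdem (g * h)), mul_smul,
    DerPar.eIdem_smul_map_of_br hδ, br_mul_br,
    DerPar.map_of_isIdempotentElem_mul hδ (isIdempotentElem_eIdem g)] at h1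

lemma derOfMap_mem_derPar {d : G → M} (hd : d ∈ DPar G K M) : derOfMap d ∈ DerPar G K M := by
  intro s t
  set e := idem (s * t).carrier
  have hs : e * idem s.carrier = e := idem_mul_idem_of_subset Finset.subset_union_left
  have hg : e * eIdem s.elt = e := idem_mul_eIdem_of_mem (Finset.mem_union_left _ s.elt_mem)
  have hgh : e * eIdem (s.elt * t.elt) = e := idem_mul_eIdem_of_mem (s * t).elt_mem
  have hst : s * idem t.carrier = e * br s.elt := mul_idem_carrier s t
  rw [← map_mul, mul_inv_self, derOfMap_of, derOfMap_of, derOfMap_of, mul_elt]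
  calc of K _ e • d (s.elt * t.elt)
      = of K _ e • (of K _ (br s.elt) • d t.elt + of K _ (eIdem (s.elt * t.elt)) • d s.elt) := by
        rw [← hd, ← mul_smul, ← map_mul, hg]
    _ = of K _ s • of K _ (idem t.carrier) • d t.elt +
          of K _ e • of K _ (idem s.carrier) • d s.elt := by
        simp only [smul_add, smul_smul, ← map_mul, hst, hs, hgh]

variable (G K M) in
noncomputable def derParEquivDPar : DerPar G K M ≃ₗ[K] DPar G K M where
  toFun δ := ⟨fun g => δ.1 (of K _ (br g)), DerPar.map_of_br_mem_dPar δ.2⟩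
  map_add' _ _ := rfl
  map_smul' _ _ := rfl
  invFun d := ⟨derOfMap d.1, derOfMap_mem_derPar d.2⟩
  left_inv δ := Subtype.ext <| (MonoidAlgebra.basis _ K).ext fun s => by
    change derOfMap _ (of K _ s) = δ.1 (of K _ s)
    rw [derOfMap_of, ← DerPar.map_of_eq_idem_smul δ.2]
  right_inv d := Subtype.ext <| funext fun g => by
    change derOfMap d.1 (of K _ (br g)) = d.1 g
    rw [derOfMap_of, idem_br_carrier]
    exact DPar.eIdem_smul d.2 g

/-- There is a `K`-linear bijection between the partial derivations
`δ : K_par(G) → M` and the maps `d ∈ D(G,M)`, given by `d(g) = δ([g])`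
with inverse `δ(e[g]) = e·d(g)`. -/
theorem derPar_linearEquiv_dPar :
    ∃ L : DerPar G K M ≃ₗ[K] DPar G K M,
      (∀ (δ : DerPar G K M) (g : G),
        (L δ : G → M) g = (δ : MonoidAlgebra K (ExelS G) →ₗ[K] M) (of K (ExelS G) (br g))) ∧
      ∀ (d : DPar G K M) (e : ExelS G) (g : G), e * e = e →
        (L.symm d : MonoidAlgebra K (ExelS G) →ₗ[K] M) (of K (ExelS G) (e * br g)) =
          of K (ExelS G) e • (d : G → M) g := by
  refine ⟨derParEquivDPar G K M, fun _ _ => rfl, fun d e g he => ?_⟩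
  obtain ⟨E, rfl⟩ : ∃ E, e = idem E := ⟨_, eq_idem_of_isIdempotentElem he⟩
  change derOfMap d.1 (of K _ (idem E * br g)) = _
  rw [derOfMap_of, idem_mul_br_carrier, mul_elt, idem_elt, br_elt, one_mul, map_mul, mul_smul,
    DPar.eIdem_smul d.2]

end
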